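/- arXiv:2101.09332 — 5 statements merged into one kernel-verified Lean document; each statement's English description precedes it below -/
import Mathlib

section
/- Let G be a finite simple graph on n vertices, and let t, t' be adjacent vertices with t of degree 2. Then G has a Hamiltonian cycle if and only if G has a Hamiltonian path whose first vertex is t and last vertex is t'. -/
/-!
Rotate a Hamiltonian cycle to start at `t`. Since `t` has degree 2, its two cycle neighbours
are all its neighbours, so `t'` is one of them; deleting the edge `tt'` from the cycle (after
reversing it if needed) leaves a Hamiltonian path from `t` to `t'`. Conversely, closing a
Hamiltonian path from `t` to `t'` with the edge `t't` gives a cycle, because the path has length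
`|V| - 1 ≥ 2` and so does not already use that edge.
-/

open SimpleGraph Walk

namespace SimpleGraph.Walk

variable {V : Type*} {G : SimpleGraph V} {u v : V}

lemma IsHamiltonian.reverse [DecidableEq V] {p : G.Walk u v} (hp : p.IsHamiltonian) :
    p.reverse.IsHamiltonian := fun w => by
  rw [support_reverse, List.count_reverse]
  exact hp w

lemma IsHamiltonianCycle.reverse [DecidableEq V] {c : G.Walk u u} (hc : c.IsHamiltonianCycle) :
    c.reverse.IsHamiltonianCycle := by
  have := hc.finite
  cases nonempty_fintype V
  rw [isHamiltonianCycle_iff_isCycle_and_length_eq] at hc ⊢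
  exact ⟨hc.1.reverse, by rw [length_reverse, hc.2]⟩

lemma IsHamiltonianCycle.exists_isHamiltonian_to_snd [DecidableEq V] {c : G.Walk u u}
    (hc : c.IsHamiltonianCycle) : ∃ p : G.Walk u c.snd, p.IsHamiltonian :=
  ⟨c.tail.reverse, hc.isHamiltonian_tail.reverse⟩

lemma IsHamiltonian.cons_isHamiltonianCycle [Fintype V] [DecidableEq V] {p : G.Walk u v}
    (hp : p.IsHamiltonian) (h : G.Adj v u) (hV : 2 < Fintype.card V) :
    (cons h p).IsHamiltonianCycle := by
  have hlen := hp.length_eq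
  rw [isHamiltonianCycle_iff_isCycle_and_length_eq, cons_isCycle_iff, length_cons, hlen]
  refine ⟨⟨hp.isPath, fun he => ?_⟩, by omega⟩
  have := hp.isPath.length_eq_one_of_mem_edges (Sym2.eq_swap ▸ he)
  omega

lemma IsCycle.eq_snd_or_eq_penultimate_of_degree_eq_two [Fintype V] [DecidableEq V]
    [DecidableRel G.Adj] {c : G.Walk u u} (hc : c.IsCycle) (hdeg : G.degree u = 2) {w : V}
    (hw : G.Adj u w) : w = c.snd ∨ w = c.penultimate := by
  have hsub : {c.snd, c.penultimate} ⊆ G.neighborFinset u := by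
    intro x hx
    rcases Finset.mem_insert.1 hx with rfl | hx
    · exact (G.mem_neighborFinset _ _).2 (c.adj_snd hc.not_nil)
    · exact Finset.mem_singleton.1 hx ▸ (G.mem_neighborFinset _ _).2
        (c.adj_penultimate hc.not_nil).symm
  have heq := Finset.eq_of_subset_of_card_le hsub (by
    rw [Finset.card_pair hc.snd_ne_penultimate, card_neighborFinset_eq_degree, hdeg])
  simpa [← heq] using (G.mem_neighborFinset _ _).2 hw

end SimpleGraph.Walk

/-- Let `G` be a finite simple graph, `t, t'` adjacent vertices with `t` of degree 2.
Then `G` has a Hamiltonian cycle iff `G` has a Hamiltonian path from `t` to `t'`. -/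
theorem stmt1 {V : Type} [Fintype V] [DecidableEq V] (G : SimpleGraph V)
    [DecidableRel G.Adj] (t t' : V) (hadj : G.Adj t t') (hdeg : G.degree t = 2) :
    (∃ (v : V) (c : G.Walk v v), c.IsHamiltonianCycle) ↔
      (∃ p : G.Walk t t', p.IsHamiltonian) := by
  constructor
  · rintro ⟨v, c, hc⟩
    have hc' := hc.rotate (hc.mem_support t)
    rcases hc'.isCycle.eq_snd_or_eq_penultimate_of_degree_eq_two hdeg hadj with rfl | rfl
    · exact hc'.exists_isHamiltonian_to_snd
    · rw [← snd_reverse]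
      exact hc'.reverse.exists_isHamiltonian_to_snd
  · rintro ⟨p, hp⟩
    have hV : 2 < Fintype.card V := hdeg ▸ G.degree_lt_card_verts t
    exact ⟨t', _, hp.cons_isHamiltonianCycle hadj.symm hV⟩
end

section
/- Let X be a finite set of items where each item x has a nonempty set P(x) of at most 2 allowed positions in a finite set of positions. Construct a 2-CNF formula with a variable v_x^i for each item x and allowed position i ∈ P(x), clauses v_x^1 ∨ v_x^2 for each item with two allowed positions, the unit clause v_x^1 for each item with one allowed position, and clauses ¬v_x^i ∨ ¬v_y^j whenever x ≠ y and positions i ∈ P(x), j ∈ P(y) coincide. Then the formula is satisfiable if and only if there exists an injective choice function f assigning to each item x a position f(x) ∈ P(x). -/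
/-- 2-SAT encoding of placing items at distinct positions, each item having a
nonempty set of at most two allowed positions: the formula (clauses
`v_x^1 ∨ v_x^2`, unit clauses for single-position items, and `¬v_x^p ∨ ¬v_y^p`
for coinciding positions of distinct items) is satisfiable iff there is an
injective choice function. -/
theorem stmt9 {ι Pos : Type} [Fintype ι] [DecidableEq ι] [DecidableEq Pos]
    (P : ι → Finset Pos) (hP : ∀ x, (P x).Nonempty ∧ (P x).card ≤ 2) :
    (∃ a : ι → Pos → Bool,
        (∀ x, ∃ q ∈ P x, a x q = true) ∧
        (∀ x y, x ≠ y → ∀ q, q ∈ P x → q ∈ P y → ¬(a x q = true ∧ a y q = true))) ↔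
      (∃ f : ι → Pos, Function.Injective f ∧ ∀ x, f x ∈ P x) := by
  constructor
  · rintro ⟨a, h1, h2⟩
    choose f hfP hfa using h1
    refine ⟨f, ?_, hfP⟩
    intro x y hxy
    by_contra hne
    exact h2 x y hne (f x) (hfP x) (hxy ▸ hfP y) ⟨hfa x, hxy ▸ hfa y⟩
  · rintro ⟨f, hinj, hfP⟩
    refine ⟨fun x q => decide (q = f x), fun x => ⟨f x, hfP x, by simp⟩, ?_⟩
    intro x y hxy q _ _ ⟨hx, hy⟩
    simp only [decide_eq_true_eq] at hx hy
    exact hxy (hinj (hx.symm.trans hy))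
end

section
/- Let s : τ → [n] be a Rikudo solution of the game constructed from a hexagonal grid graph H (vertex gadgets of six cells, edge gadgets of one cell, enforced endpoints 1 and n in adjacent cells of one vertex gadget). Then the cyclic order in which the solution path visits the vertex gadgets induces a Hamiltonian cycle of H: each edge gadget is a single cell, so each edge of H is used at most once, and since every vertex of H has degree 2 or 3, no vertex gadget is visited twice. -/
open SimpleGraph

/-- For any walk, twice the count of `v` in the support equals the number of
edges containing `v` plus endpoint indicators. -/
private lemma walk_edges_filter_count {V : Type} [DecidableEq V] {H : SimpleGraph V} :
    ∀ {a b : V} (Q : H.Walk a b) (v : V),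
      (Q.edges.filter (fun ee => v ∈ ee)).length
        + (if a = v then 1 else 0) + (if b = v then 1 else 0)
        = 2 * Q.support.count v := by
  intro a b Q v
  induction Q with
  | nil =>
    simp only [Walk.edges_nil, List.filter_nil, List.length_nil, Walk.support_nil,
      List.count_cons, List.count_nil, beq_iff_eq]
    omega
  | @cons a b c h q ih =>
    have hne := h.ne
    have key : (if v ∈ s(a, b) then 1 else 0)
        = (if a = v then 1 else 0) + (if b = v then 1 else 0) := by
      by_cases hva : a = v
      · by_cases hvb : b = v
        · exact absurd (hva.trans hvb.symm) hne
        · rw [if_pos (by rw [Sym2.mem_iff]; left; exact hva.symm), if_pos hva, if_neg hvb]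
      · by_cases hvb : b = v
        · rw [if_pos (by rw [Sym2.mem_iff]; right; exact hvb.symm), if_neg hva, if_pos hvb]
        · rw [if_neg (by
              rw [Sym2.mem_iff]
              push_neg
              exact ⟨fun hh => hva hh.symm, fun hh => hvb hh.symm⟩),
            if_neg hva, if_neg hvb]
    rw [Walk.edges_cons, Walk.support_cons, List.count_cons]
    simp only [List.filter_cons, decide_eq_true_eq, beq_iff_eq]
    by_cases hcond : v ∈ s(a, b)
    · rw [if_pos hcond] at key ⊢
      simp only [List.length_cons]
      omega
    · rw [if_neg hcond] at key ⊢
      omega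

private lemma rikudo_key {V C : Type} [DecidableEq V] [DecidableEq C]
    {H : SimpleGraph V} {Gc : SimpleGraph C}
    {owner : C → V ⊕ {e : Sym2 V // e ∈ H.edgeSet}}
    (hedge : ∀ e : {e : Sym2 V // e ∈ H.edgeSet}, ∃! c : C, owner c = Sum.inr e)
    (hadj : ∀ c c', Gc.Adj c c' → owner c = owner c' ∨
      ∃ (v : V) (e : {e : Sym2 V // e ∈ H.edgeSet}), v ∈ (e : Sym2 V) ∧
        ((owner c = Sum.inl v ∧ owner c' = Sum.inr e) ∨
          (owner c' = Sum.inl v ∧ owner c = Sum.inr e)))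
    {c₁ : C} {w : V} (hw : owner c₁ = Sum.inl w) :
    ∀ (n : ℕ) {a : C} (q : Gc.Walk a c₁), q.length ≤ n → q.support.Nodup →
      ∀ (u : V), owner a = Sum.inl u →
      ∃ Q : H.Walk u w, Q.edges.Nodup ∧
        (∀ ee ∈ Q.edges, ∃ c ∈ q.support, ∃ he : ee ∈ H.edgeSet, owner c = Sum.inr ⟨ee, he⟩) ∧
        (∀ v c, c ∈ q.support → owner c = Sum.inl v → v ∈ Q.support) := by
  intro n
  induction n with
  | zero =>
    intro a q hlen hnd u ha
    cases q with
    | nil =>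
      have huw : u = w := by rw [ha] at hw; exact Sum.inl.inj hw
      subst huw
      refine ⟨Walk.nil, by simp, by simp, ?_⟩
      intro v c hc hcv
      simp only [Walk.support_nil, List.mem_singleton] at hc ⊢
      subst hc
      exact Sum.inl.inj (hcv.symm.trans hw)
    | cons h q' => simp [Walk.length_cons] at hlen
  | succ n ih =>
    intro a q hlen hnd u ha
    cases q with
    | nil =>
      have huw : u = w := by rw [ha] at hw; exact Sum.inl.inj hw
      subst huw
      refine ⟨Walk.nil, by simp, by simp, ?_⟩
      intro v c hc hcv
      simp only [Walk.support_nil, List.mem_singleton] at hc ⊢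
      subst hc
      exact Sum.inl.inj (hcv.symm.trans hw)
    | @cons _ b _ h q' =>
      rcases hob : owner b with u' | e
      · -- next cell is in the same vertex gadget
        have huu' : u' = u := by
          rcases hadj a b h with hsame | ⟨v, e', _, ⟨_, hb'⟩ | ⟨_, ha'⟩⟩
          · rw [ha, hob] at hsame; exact (Sum.inl.inj hsame).symm
          · rw [hob] at hb'; exact absurd hb' (by simp)
          · rw [ha] at ha'; exact absurd ha' (by simp)
        subst huu'
        have hnd' : q'.support.Nodup := by
          rw [Walk.support_cons] at hnd; exact (List.nodup_cons.mp hnd).2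
        have hlen' : q'.length ≤ n := by
          rw [Walk.length_cons] at hlen; omega
        obtain ⟨Q, hQ1, hQ2, hQ3⟩ := ih q' hlen' hnd' u' hob
        refine ⟨Q, hQ1, ?_, ?_⟩
        · intro ee hee
          obtain ⟨c, hc, he, hoc⟩ := hQ2 ee hee
          exact ⟨c, by simp [Walk.support_cons, hc], he, hoc⟩
        · intro v c hc hcv
          rw [Walk.support_cons, List.mem_cons] at hc
          rcases hc with rfl | hc
          · rw [ha] at hcv
            rw [← Sum.inl.inj hcv]
            exact Q.start_mem_support
          · exact hQ3 v c hc hcv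
      · -- next cell is an edge gadget
        have hue : u ∈ e.val := by
          rcases hadj a b h with hsame | ⟨v, e', hve', ⟨hva, hb'⟩ | ⟨hvb, ha'⟩⟩
          · rw [ha, hob] at hsame; exact absurd hsame (by simp)
          · rw [ha] at hva
            rw [hob] at hb'
            rw [Sum.inl.inj hva, Sum.inr.inj hb']
            exact hve'
          · rw [hob] at hvb; exact absurd hvb (by simp)
        cases q' with
        | nil => rw [hob] at hw; exact absurd hw (by simp)
        | @cons _ b2 _ h2 q'' =>
          obtain ⟨u'', hu''e, hb2⟩ : ∃ u'', u'' ∈ e.val ∧ owner b2 = Sum.inl u'' := by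
            rcases hadj b b2 h2 with hsame | ⟨v, e', hve', ⟨hvb, hb2'⟩ | ⟨hvb2, hb'⟩⟩
            · exfalso
              obtain ⟨cc, _, hun⟩ := hedge e
              have hbb2 : b = b2 := (hun b hob).trans (hun b2 (hsame.symm.trans hob)).symm
              rw [hbb2] at h2
              exact Gc.irrefl h2
            · rw [hob] at hvb; exact absurd hvb (by simp)
            · rw [hob] at hb'
              have h2e : e = e' := Sum.inr.inj hb'
              exact ⟨v, by rw [h2e]; exact hve', hvb2⟩
          have hnd'' : q''.support.Nodup := by
            rw [Walk.support_cons, Walk.support_cons] at hnd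
            exact ((List.nodup_cons.mp hnd).2.tail)
          have hbnot : b ∉ q''.support := by
            rw [Walk.support_cons, Walk.support_cons] at hnd
            have := (List.nodup_cons.mp hnd).2
            exact fun hb => (List.nodup_cons.mp this).1 hb
          have hlen'' : q''.length ≤ n := by
            rw [Walk.length_cons, Walk.length_cons] at hlen; omega
          by_cases huu : u'' = u
          · subst huu
            obtain ⟨Q, hQ1, hQ2, hQ3⟩ := ih q'' hlen'' hnd'' u'' hb2
            refine ⟨Q, hQ1, ?_, ?_⟩
            · intro ee hee
              obtain ⟨c, hc, he, hoc⟩ := hQ2 ee hee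
              exact ⟨c, by simp [Walk.support_cons, hc], he, hoc⟩
            · intro v c hc hcv
              rw [Walk.support_cons, List.mem_cons] at hc
              rcases hc with rfl | hc
              · rw [ha] at hcv
                rw [← Sum.inl.inj hcv]
                exact Q.start_mem_support
              · rw [Walk.support_cons, List.mem_cons] at hc
                rcases hc with rfl | hc
                · rw [hob] at hcv; exact absurd hcv (by simp)
                · exact hQ3 v c hc hcv
          · obtain ⟨Q, hQ1, hQ2, hQ3⟩ := ih q'' hlen'' hnd'' u'' hb2
            have hne : u ≠ u'' := fun hh => huu hh.symm
            have heval : e.val = s(u, u'') := (Sym2.mem_and_mem_iff hne).mp ⟨hue, hu''e⟩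
            have hadjH : H.Adj u u'' := by
              rw [← SimpleGraph.mem_edgeSet, ← heval]
              exact e.property
            have hnotmem : s(u, u'') ∉ Q.edges := by
              intro hmem
              obtain ⟨c, hc, he, hoc⟩ := hQ2 _ hmem
              have hceq : e = (⟨s(u, u''), he⟩ : {e : Sym2 V // e ∈ H.edgeSet}) :=
                Subtype.ext heval
              rw [← hceq] at hoc
              obtain ⟨cc, _, hun⟩ := hedge e
              have : c = b := (hun c hoc).trans (hun b hob).symm
              rw [this] at hc
              exact hbnot hc
            refine ⟨Walk.cons hadjH Q, ?_, ?_, ?_⟩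
            · rw [Walk.edges_cons]
              exact List.nodup_cons.mpr ⟨hnotmem, hQ1⟩
            · intro ee hee
              rw [Walk.edges_cons, List.mem_cons] at hee
              rcases hee with rfl | hee
              · refine ⟨b, by simp [Walk.support_cons], heval ▸ e.property, ?_⟩
                rw [hob]
                congr 1
                exact Subtype.ext heval
              · obtain ⟨c, hc, he, hoc⟩ := hQ2 ee hee
                exact ⟨c, by simp [Walk.support_cons, hc], he, hoc⟩
            · intro v c hc hcv
              rw [Walk.support_cons, List.mem_cons] at hc
              rcases hc with rfl | hc
              · rw [ha] at hcv
                rw [← Sum.inl.inj hcv]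
                exact (Walk.cons hadjH Q).start_mem_support
              · rw [Walk.support_cons, List.mem_cons] at hc
                rcases hc with rfl | hc
                · rw [hob] at hcv; exact absurd hcv (by simp)
                · rw [Walk.support_cons]
                  exact List.mem_cons_of_mem _ (hQ3 v c hc hcv)

/-- Soundness of the Rikudo-without-holes reduction: let `H` be a (hexagonal
grid) graph with all degrees 2 or 3, and let the game cells `C` be partitioned
by `owner` into vertex gadgets of six cells and edge gadgets of one cell, such
that cells of distinct gadgets are adjacent only when one is an edge gadget and
the other belongs to a gadget of an incident vertex.  If the game graph `Gc`
has a Hamiltonian path between two adjacent cells `c₀, c₁` of one vertex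
gadget, then `H` has a Hamiltonian cycle. -/
theorem stmt13 {V C : Type} [Fintype V] [DecidableEq V] [Fintype C] [DecidableEq C]
    (H : SimpleGraph V) [DecidableRel H.Adj]
    (hdeg : ∀ v, H.degree v = 2 ∨ H.degree v = 3)
    (Gc : SimpleGraph C)
    (owner : C → V ⊕ {e : Sym2 V // e ∈ H.edgeSet})
    (hvert : ∀ v : V, (Finset.univ.filter fun c => owner c = Sum.inl v).card = 6)
    (hedge : ∀ e : {e : Sym2 V // e ∈ H.edgeSet}, ∃! c : C, owner c = Sum.inr e)
    (hadj : ∀ c c', Gc.Adj c c' → owner c = owner c' ∨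
      ∃ (v : V) (e : {e : Sym2 V // e ∈ H.edgeSet}), v ∈ (e : Sym2 V) ∧
        ((owner c = Sum.inl v ∧ owner c' = Sum.inr e) ∨
          (owner c' = Sum.inl v ∧ owner c = Sum.inr e)))
    (c₀ c₁ : C) (v₀ : V) (h₀ : owner c₀ = Sum.inl v₀) (h₁ : owner c₁ = Sum.inl v₀)
    (hadj01 : Gc.Adj c₀ c₁)
    (p : Gc.Walk c₀ c₁) (hp : p.IsHamiltonian) :
    ∃ (v : V) (q : H.Walk v v), q.IsHamiltonianCycle := by
  classical
  have hpnodup : p.support.Nodup := hp.isPath.support_nodup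
  obtain ⟨Q, hQnd, hQe, hQs⟩ := rikudo_key hedge hadj h₁ p.length p le_rfl hpnodup v₀ h₀
  -- every vertex of H appears in the support of Q
  have hallsup : ∀ v, v ∈ Q.support := by
    intro v
    have hcard := hvert v
    have hpos : 0 < (Finset.univ.filter fun c => owner c = Sum.inl v).card := by omega
    obtain ⟨c, hc⟩ := Finset.card_pos.mp hpos
    rw [Finset.mem_filter] at hc
    exact hQs v c (hp.mem_support c) hc.2
  -- counting: each vertex appears at most once in Q.support.tail
  have hle : ∀ v, Q.support.tail.count v ≤ 1 := by
    intro v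
    have hcnt := walk_edges_filter_count Q v
    have hsc : Q.support.count v = Q.support.tail.count v + (if v₀ = v then 1 else 0) := by
      conv_lhs => rw [Q.support_eq_cons]
      rw [List.count_cons]
      simp only [beq_iff_eq]
    have hsub : (Q.edges.filter (fun ee => v ∈ ee)).length ≤ H.degree v := by
      have hnodupf : (Q.edges.filter (fun ee => v ∈ ee)).Nodup := hQnd.filter _
      have hsubf : (Q.edges.filter (fun ee => v ∈ ee)).toFinset ⊆ H.incidenceFinset v := by
        intro ee hee
        rw [List.mem_toFinset, List.mem_filter] at hee
        rw [SimpleGraph.mem_incidenceFinset]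
        exact ⟨Q.edges_subset_edgeSet hee.1, by simpa using hee.2⟩
      have := Finset.card_le_card hsubf
      rwa [List.toFinset_card_of_nodup hnodupf, SimpleGraph.card_incidenceFinset_eq_degree]
        at this
    rcases hdeg v with hd | hd <;> rw [hd] at hsub <;> omega
  -- Q is not nil
  obtain ⟨u1, hu1adj⟩ : ∃ u1, H.Adj v₀ u1 := by
    rw [← SimpleGraph.degree_pos_iff_exists_adj]
    rcases hdeg v₀ with hd | hd <;> omega
  have hu1ne : u1 ≠ v₀ := fun hh => H.irrefl (hh ▸ hu1adj)
  have hu1tail : u1 ∈ Q.support.tail := by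
    have := hallsup u1
    rw [Q.support_eq_cons, List.mem_cons] at this
    rcases this with hh | hh
    · exact absurd hh hu1ne
    · exact hh
  have htne : Q.support.tail ≠ [] := List.ne_nil_of_mem hu1tail
  have hQne : Q ≠ Walk.nil := by
    intro hQeq
    rw [hQeq] at htne
    simp at htne
  have hv0tail : v₀ ∈ Q.support.tail := by
    have hgl : Q.support.tail.getLast htne = v₀ := by
      rw [List.getLast_tail]
      exact Q.getLast_support
    have hm := List.getLast_mem htne
    rwa [hgl] at hm
  have hmemtail : ∀ v, v ∈ Q.support.tail := by
    intro v
    by_cases hv : v = v₀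
    · exact hv ▸ hv0tail
    · have := hallsup v
      rw [Q.support_eq_cons, List.mem_cons] at this
      rcases this with hh | hh
      · exact absurd hh hv
      · exact hh
  have hone : ∀ v, Q.support.tail.count v = 1 :=
    fun v => le_antisymm (hle v) (List.count_pos_iff.mpr (hmemtail v))
  refine ⟨v₀, Q, ?_⟩
  rw [Walk.isHamiltonianCycle_iff_isCycle_and_support_count_tail_eq_one]
  exact ⟨⟨⟨⟨hQnd⟩, hQne⟩, List.nodup_iff_count_le_one.mpr hle⟩, hone⟩
end

section
/- Let P be a graph property whose decision problem asks, given a Rikudo game (τ, m, p), whether it has a solution, and suppose this problem is NP-hard even when dom(m) = {cells of 1 and n}. Then for any real constant 0 < α ≤ 1, the restriction to games with |dom(m)| ≥ α·|τ| is also NP-hard: given an instance with n' cells, append a path of ⌈n'/α⌉ − n' extra cells with all their numbers n'+1, …, ⌈n'/α⌉ pre-placed along the path; the padded game has a solution iff the original does. -/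
/-!
A solution of the original game extends to the padded one by numbering the cells of the path
`n' + 1, n' + 2, …` in order: consecutive numbers are adjacent because the path is a chain that
starts next to the cell numbered `n'`. Conversely, the placement forces the path cells of a
solution of the padded game to carry exactly the numbers above `n'`, so the cells of `τ` carry
exactly `1, …, n'` and the solution restricts to the original game.
-/

def hexOffsets : Set (ℤ × ℤ) := {(1,0), (-1,0), (0,1), (0,-1), (1,-1), (-1,1)}

def hexAdjRel (a b : ℤ × ℤ) : Prop := (b.1 - a.1, b.2 - a.2) ∈ hexOffsets

/-- The adjacency graph of the hexagonal grid cells. -/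
def hexGraph : SimpleGraph (ℤ × ℤ) := SimpleGraph.fromRel hexAdjRel

/-- `s` is a solution of the Rikudo game `(τ, m, p)`. -/
def IsRikudoSolution (τ : Finset (ℤ × ℤ)) (m : (ℤ × ℤ) → Option ℕ)
    (p : Set ((ℤ × ℤ) × (ℤ × ℤ))) (s : (ℤ × ℤ) → ℕ) : Prop :=
  Set.BijOn s (τ : Set (ℤ × ℤ)) (Set.Icc 1 τ.card) ∧
  (∀ c ∈ τ, ∀ c' ∈ τ, s c' = s c + 1 → hexGraph.Adj c c') ∧
  (∀ c ∈ τ, ∀ k, m c = some k → s c = k) ∧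
  (∀ a b : ℤ × ℤ, (a, b) ∈ p → s a + 1 = s b ∨ s b + 1 = s a)

open Set

namespace Set

variable {α β : Type*} {f : α → β} {s₁ s₂ : Set α} {t t₁ t₂ : Set β}

theorem BijOn.union_of_disjoint_right (h₁ : BijOn f s₁ t₁) (h₂ : BijOn f s₂ t₂)
    (ht : Disjoint t₁ t₂) : BijOn f (s₁ ∪ s₂) (t₁ ∪ t₂) :=
  have hs : Disjoint s₁ s₂ := (ht.preimage f).mono h₁.mapsTo h₂.mapsTo
  h₁.union h₂ <| (injOn_union hs).2 ⟨h₁.injOn, h₂.injOn,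
    fun _ hx _ hy => ht.ne_of_mem (h₁.mapsTo hx) (h₂.mapsTo hy)⟩

theorem BijOn.sdiff_of_union (h : BijOn f (s₁ ∪ s₂) t) (h₂ : BijOn f s₂ t₂)
    (hs : Disjoint s₁ s₂) : BijOn f s₁ (t \ t₂) := by
  refine ⟨fun x hx => ⟨h.mapsTo (Or.inl hx), fun hfx => ?_⟩, h.injOn.mono subset_union_left, ?_⟩
  · obtain ⟨y, hy, hyx⟩ := h₂.surjOn hfx
    exact hs.ne_of_mem hx hy (h.injOn (Or.inl hx) (Or.inr hy) hyx.symm)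
  · rintro y ⟨hyt, hyt₂⟩
    obtain ⟨x, hx | hx, rfl⟩ := h.surjOn hyt
    · exact ⟨x, hx, rfl⟩
    · exact absurd (h₂.mapsTo hx) hyt₂

theorem Icc_one_union_Icc_add_one (n k : ℕ) : Icc 1 n ∪ Icc (n + 1) (n + k) = Icc 1 (n + k) := by
  ext; simp only [mem_union, mem_Icc]; omega

end Set

namespace List

variable {α : Type*} [BEq α] [LawfulBEq α] {l : List α}

theorem IsChain.rel_of_idxOf_eq_succ {R : α → α → Prop} (hl : l.IsChain R) {a b : α}
    (hb : b ∈ l) (hab : l.idxOf b = l.idxOf a + 1) : R a b := by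
  have hb' := idxOf_lt_length_iff.2 hb
  have ha : a ∈ l := idxOf_lt_length_iff.1 (by omega)
  have hrel := isChain_iff_getElem.1 hl (l.idxOf a) (by omega)
  simpa only [← hab, getElem_idxOf] using hrel

theorem Nodup.bijOn_idxOf_add (hl : l.Nodup) (n : ℕ) :
    BijOn (fun c => n + l.idxOf c + 1) {c | c ∈ l} (Icc (n + 1) (n + l.length)) := by
  refine ⟨fun c hc => ?_, fun a ha b _ hab => (idxOf_inj ha).1 (by simp only at hab; omega),
    fun k hk => ?_⟩
  · have := idxOf_lt_length_iff.2 hc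
    simp only [mem_Icc]
    omega
  · obtain ⟨hk₁, hk₂⟩ := hk
    refine ⟨l[k - n - 1], getElem_mem _, ?_⟩
    simp only [hl.idxOf_getElem]
    omega

end List

theorem Finset.card_union_toFinset {α : Type*} [DecidableEq α] {s : Finset α} {l : List α}
    (hl : l.Nodup) (hls : ∀ c ∈ l, c ∉ s) : (s ∪ l.toFinset).card = s.card + l.length := by
  rw [card_union_of_disjoint, List.toFinset_card_of_nodup hl]
  exact disjoint_right.2 fun c hc => hls c (List.mem_toFinset.1 hc)

def padPlacement (τ : Finset (ℤ × ℤ)) (m : (ℤ × ℤ) → Option ℕ) (q : List (ℤ × ℤ)) :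
    (ℤ × ℤ) → Option ℕ :=
  fun c => if c ∈ q then some (τ.card + q.idxOf c + 1) else m c

def padSolution (τ : Finset (ℤ × ℤ)) (q : List (ℤ × ℤ)) (s : (ℤ × ℤ) → ℕ) : (ℤ × ℤ) → ℕ :=
  fun c => if c ∈ q then τ.card + q.idxOf c + 1 else s c

section Padding

variable {τ : Finset (ℤ × ℤ)} {m : (ℤ × ℤ) → Option ℕ} {p : Set ((ℤ × ℤ) × (ℤ × ℤ))}
  {q : List (ℤ × ℤ)} {s : (ℤ × ℤ) → ℕ}

theorem padSolution_of_mem_left (hqτ : ∀ c ∈ q, c ∉ τ) {c : ℤ × ℤ} (hc : c ∈ τ) :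
    padSolution τ q s c = s c :=
  if_neg fun hcq => hqτ c hcq hc

theorem padSolution_of_mem_right {c : ℤ × ℤ} (hc : c ∈ q) :
    padSolution τ q s c = τ.card + q.idxOf c + 1 :=
  if_pos hc

theorem IsRikudoSolution.adj_of_padSolution_eq_succ {tₙ c c' : ℤ × ℤ}
    (hs : IsRikudoSolution τ m p s) (htₙ : tₙ ∈ τ) (hmₙ : m tₙ = some τ.card)
    (hqτ : ∀ c ∈ q, c ∉ τ) (hqchain : (tₙ :: q).IsChain hexGraph.Adj)
    (hc : c ∈ τ ∪ q.toFinset) (hc' : c' ∈ τ ∪ q.toFinset)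
    (hcc' : padSolution τ q s c' = padSolution τ q s c + 1) : hexGraph.Adj c c' := by
  obtain ⟨hbij, hadj, hplace, -⟩ := hs
  have hle : ∀ c ∈ τ, s c ≤ τ.card := fun c hc => (hbij.mapsTo hc).2
  -- the chain `tₙ :: q` is indexed by the new numbers shifted down by `τ.card`
  have hidx : ∀ c ∈ q, (tₙ :: q).idxOf c = q.idxOf c + 1 := fun c hc =>
    List.idxOf_cons_ne q fun h => hqτ c hc (h ▸ htₙ)
  rcases Finset.mem_union.1 hc with hc | hc <;> rcases Finset.mem_union.1 hc' with hc' | hc'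
  · rw [padSolution_of_mem_left hqτ hc, padSolution_of_mem_left hqτ hc'] at hcc'
    exact hadj c hc c' hc' hcc'
  · rw [List.mem_toFinset] at hc'
    rw [padSolution_of_mem_left hqτ hc, padSolution_of_mem_right hc'] at hcc'
    have hc_eq : c = tₙ := hbij.injOn hc htₙ <| by
      rw [hplace tₙ htₙ _ hmₙ]; have := hle c hc; omega
    subst hc_eq
    refine hqchain.rel_of_idxOf_eq_succ (List.mem_cons_of_mem _ hc') ?_
    rw [hidx c' hc', List.idxOf_cons_self]; have := hle c hc; omega
  · rw [List.mem_toFinset] at hc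
    rw [padSolution_of_mem_right hc, padSolution_of_mem_left hqτ hc'] at hcc'
    have := hle c' hc'; omega
  · rw [List.mem_toFinset] at hc hc'
    rw [padSolution_of_mem_right hc, padSolution_of_mem_right hc'] at hcc'
    refine hqchain.rel_of_idxOf_eq_succ (List.mem_cons_of_mem _ hc') ?_
    rw [hidx c hc, hidx c' hc']; omega

theorem IsRikudoSolution.pad {tₙ : ℤ × ℤ} (hs : IsRikudoSolution τ m p s) (htₙ : tₙ ∈ τ)
    (hmₙ : m tₙ = some τ.card) (hpdom : ∀ a b : ℤ × ℤ, (a, b) ∈ p → a ∈ τ ∧ b ∈ τ)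
    (hqnd : q.Nodup) (hqτ : ∀ c ∈ q, c ∉ τ) (hqchain : (tₙ :: q).IsChain hexGraph.Adj) :
    IsRikudoSolution (τ ∪ q.toFinset) (padPlacement τ m q) p (padSolution τ q s) := by
  have hτ : ∀ c ∈ τ, padSolution τ q s c = s c := fun c hc => padSolution_of_mem_left hqτ hc
  refine ⟨?_, fun c hc c' hc' => hs.adj_of_padSolution_eq_succ htₙ hmₙ hqτ hqchain hc hc',
    fun c hc k hk => ?_, fun a b hab => ?_⟩
  · rw [Finset.coe_union, List.coe_toFinset, Finset.card_union_toFinset hqnd hqτ, ← Icc_one_union_Icc_add_one]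
    refine (hs.1.congr fun c hc => (hτ c hc).symm).union_of_disjoint_right
      ((hqnd.bijOn_idxOf_add τ.card).congr fun c hc => (padSolution_of_mem_right hc).symm) ?_
    exact Set.disjoint_left.2 fun k hk₁ hk₂ => by simp only [mem_Icc] at hk₁ hk₂; omega
  · by_cases hcq : c ∈ q
    · rw [padSolution_of_mem_right hcq]
      simpa [padPlacement, hcq] using hk
    · have hcτ : c ∈ τ := (Finset.mem_union.1 hc).resolve_right (mt List.mem_toFinset.1 hcq)
      rw [hτ c hcτ]
      exact hs.2.2.1 c hcτ k (by simpa [padPlacement, hcq] using hk)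
  · obtain ⟨ha, hb⟩ := hpdom a b hab
    rw [hτ a ha, hτ b hb]
    exact hs.2.2.2 a b hab

theorem IsRikudoSolution.of_pad (hs : IsRikudoSolution (τ ∪ q.toFinset) (padPlacement τ m q) p s)
    (hqnd : q.Nodup) (hqτ : ∀ c ∈ q, c ∉ τ) : IsRikudoSolution τ m p s := by
  obtain ⟨hbij, hadj, hplace, hp⟩ := hs
  have hτ : ∀ c ∈ τ, c ∈ τ ∪ q.toFinset := fun c => Finset.mem_union_left _
  refine ⟨?_, fun c hc c' hc' => hadj c (hτ c hc) c' (hτ c' hc'), fun c hc k hk => ?_, hp⟩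
  · have hpath : BijOn s {c | c ∈ q} (Icc (τ.card + 1) (τ.card + q.length)) :=
      (hqnd.bijOn_idxOf_add τ.card).congr fun c hc =>
        (hplace c (Finset.mem_union_right _ (List.mem_toFinset.2 hc)) _ (if_pos hc)).symm
    rw [Finset.coe_union, List.coe_toFinset, Finset.card_union_toFinset hqnd hqτ] at hbij
    convert hbij.sdiff_of_union hpath (Set.disjoint_right.2 hqτ) using 1
    ext; simp only [mem_Icc, mem_sdiff]; omega
  · exact hplace c (hτ c hc) k (by rwa [padPlacement, if_neg fun hcq => hqτ c hcq hc])

end Padding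

theorem stmt14_general
    (τ : Finset (ℤ × ℤ)) (m : (ℤ × ℤ) → Option ℕ) (p : Set ((ℤ × ℤ) × (ℤ × ℤ)))
    (tₙ : ℤ × ℤ) (htₙ : tₙ ∈ τ)
    (hmₙ : m tₙ = some τ.card)
    (hpdom : ∀ a b : ℤ × ℤ, (a, b) ∈ p → a ∈ τ ∧ b ∈ τ)
    (q : List (ℤ × ℤ)) (hqnd : q.Nodup)
    (hqτ : ∀ c ∈ q, c ∉ τ)
    (hqchain : List.Chain hexGraph.Adj tₙ q) :
    (∃ s, IsRikudoSolution τ m p s) ↔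
      (∃ s, IsRikudoSolution (τ ∪ q.toFinset)
        (fun c => if c ∈ q then some (τ.card + q.idxOf c + 1) else m c) p s) :=
  ⟨fun ⟨_, hs⟩ => ⟨_, hs.pad htₙ hmₙ hpdom hqnd hqτ hqchain⟩,
    fun ⟨_, hs⟩ => ⟨_, hs.of_pad hqnd hqτ⟩⟩

/-- Padding a Rikudo game (whose placed numbers are exactly `1` and `n' = |τ|`,
on adjacent cells) with a path `q` of `⌈n'/α⌉ - n'` fresh cells attached to the
cell numbered `n'`, pre-placing the numbers `n'+1, …, ⌈n'/α⌉` along `q`: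
the padded game has a solution iff the original game does.  (This is the
padding argument showing `α`-Rikudo without holes is `NP`-hard.) -/
theorem stmt14 (α : ℝ) (hα0 : 0 < α) (hα1 : α ≤ 1)
    (τ : Finset (ℤ × ℤ)) (m : (ℤ × ℤ) → Option ℕ) (p : Set ((ℤ × ℤ) × (ℤ × ℤ)))
    (t₁ tₙ : ℤ × ℤ) (ht₁ : t₁ ∈ τ) (htₙ : tₙ ∈ τ) (htadj : hexGraph.Adj t₁ tₙ)
    (hm₁ : m t₁ = some 1) (hmₙ : m tₙ = some τ.card)
    (hdom : ∀ c, m c ≠ none → c = t₁ ∨ c = tₙ)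
    (hpdom : ∀ a b : ℤ × ℤ, (a, b) ∈ p → a ∈ τ ∧ b ∈ τ)
    (q : List (ℤ × ℤ)) (hq : q ≠ []) (hqnd : q.Nodup)
    (hqτ : ∀ c ∈ q, c ∉ τ)
    (hqchain : List.Chain hexGraph.Adj tₙ q)
    (hqlen : q.length = ⌈(τ.card : ℝ) / α⌉₊ - τ.card) :
    (∃ s, IsRikudoSolution τ m p s) ↔
      (∃ s, IsRikudoSolution (τ ∪ q.toFinset)
        (fun c => if c ∈ q then some (τ.card + q.idxOf c + 1) else m c) p s) :=
  stmt14_general τ m p tₙ htₙ hmₙ hpdom q hqnd hqτ hqchain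
end

section
/- Let s : τ → [n] be a bijection such that consecutive numbers lie on adjacent cells, and suppose the game's cell set τ is partitioned into blocks (macrocells) such that the pre-placed numbers in each block form intervals of [n]. If every number of [n] not pre-placed lies in an interval whose endpoints are pre-placed within a single block, then s restricted to each block is determined up to solving that block independently; i.e., the game has a solution iff each block admits a local solution consistent with its pre-placed boundary numbers. -/
/-- The numbers assigned to block `b`: the pre-placed numbers whose cell lies in
`b`, together with the gap numbers of maximal un-placed intervals both of whose
pre-placed endpoints lie in `b`. -/
def blockNums {C β : Type} (blk : C → β) (m : ℕ → Option C) (n : ℕ) (b : β) :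
    Set ℕ :=
  {x | 1 ≤ x ∧ x ≤ n ∧
    ((∃ c, m x = some c ∧ blk c = b) ∨
      ∃ a c ca cc, a < x ∧ x < c ∧ m a = some ca ∧ m c = some cc ∧
        blk ca = b ∧ blk cc = b ∧ ∀ y, a < y → y < c → m y = none)}

/-- A number belongs to at most one block's number set. -/
lemma blockNums_eq_of_mem {C β : Type} {blk : C → β} {m : ℕ → Option C} {n : ℕ}
    {b b' : β} {x : ℕ} (h : x ∈ blockNums blk m n b) (h' : x ∈ blockNums blk m n b') :
    b = b' := by
  obtain ⟨_, _, h⟩ := h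
  obtain ⟨_, _, h'⟩ := h'
  rcases h with ⟨c, hc, rfl⟩ | ⟨a, co, ca, cc, ha, hco, hma, hmc, hba, hbc, hnone⟩
  · rcases h' with ⟨c', hc', rfl⟩ | ⟨a', co', ca', cc', ha', hco', hma', hmc', hba', hbc', hnone'⟩
    · rw [hc] at hc'; injection hc' with e; rw [e]
    · rw [hnone' x ha' hco'] at hc; exact absurd hc (by simp)
  · rcases h' with ⟨c', hc', rfl⟩ | ⟨a', co', ca', cc', ha', hco', hma', hmc', hba', hbc', hnone'⟩
    · rw [hnone x ha hco] at hc'; exact absurd hc' (by simp)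
    · have haa : a = a' := by
        rcases lt_trichotomy a a' with h | h | h
        · rw [hnone a' h (by omega)] at hma'; exact absurd hma' (by simp)
        · exact h
        · rw [hnone' a h (by omega)] at hma; exact absurd hma (by simp)
      subst haa
      rw [hma] at hma'; injection hma' with e
      rw [← hba, ← hba', e]

/-- Modular correctness of the macrocell construction: if every non-pre-placed
number lies in a gap interval whose pre-placed endpoints are in a single block,
cells adjacent across distinct blocks are both pre-placed, and consecutive
pre-placed numbers lie on adjacent cells, then the game has a solution iff
every block admits a local solution consistent with its pre-placed numbers. -/
theorem stmt15 {C β : Type} [Fintype C] [DecidableEq C] (A : SimpleGraph C)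
    (blk : C → β) (m : ℕ → Option C) (n : ℕ) (hn : n = Fintype.card C)
    (hm_inj : ∀ x y c, m x = some c → m y = some c → x = y)
    (hm_dom : ∀ x c, m x = some c → 1 ≤ x ∧ x ≤ n)
    (hgap : ∀ x, 1 ≤ x → x ≤ n → m x = none →
      ∃ a c ca cc, a < x ∧ x < c ∧ m a = some ca ∧ m c = some cc ∧
        blk ca = blk cc ∧ ∀ y, a < y → y < c → m y = none)
    (hcross : ∀ c c', A.Adj c c' →
      blk c = blk c' ∨ ((∃ x, m x = some c) ∧ ∃ x, m x = some c'))
    (hpre : ∀ x c c', m x = some c → m (x + 1) = some c' → A.Adj c c') :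
    (∃ s : C → ℕ, Function.Injective s ∧ (∀ c, s c ∈ Set.Icc 1 n) ∧
        (∀ k ∈ Set.Icc 1 n, ∃ c, s c = k) ∧
        (∀ c c', s c' = s c + 1 → A.Adj c c') ∧
        (∀ x c, m x = some c → s c = x)) ↔
      (∀ b : β, ∃ s : {c // blk c = b} → ℕ, Function.Injective s ∧
        (∀ c, s c ∈ blockNums blk m n b) ∧
        (∀ x ∈ blockNums blk m n b, ∃ c, s c = x) ∧
        (∀ c c' : {c // blk c = b}, s c' = s c + 1 → A.Adj c.1 c'.1) ∧
        (∀ x (c : {c // blk c = b}), m x = some c.1 → s c = x)) := by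
  constructor
  · rintro ⟨s, hinj, hmem, hsurj, hadj, hcons⟩
    -- Every cell's number belongs to the block numbers of its own block.
    have key : ∀ c, s c ∈ blockNums blk m n (blk c) := by
      intro c
      obtain ⟨h1, h2⟩ := hmem c
      rcases hx : m (s c) with _ | d
      · obtain ⟨a, co, ca, cc, ha, hco, hma, hmc, hbeq, hnone⟩ := hgap (s c) h1 h2 hx
        have chain : ∀ k, ∀ c', s c' = a + k → a + k ≤ s c → blk c' = blk ca := by
          intro k
          induction k with
          | zero =>
            intro c' h _
            have : c' = ca := hinj (by rw [h, hcons a ca hma]; omega)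
            rw [this]
          | succ k ih =>
            intro c' h hle
            obtain ⟨c'', hc''⟩ := hsurj (a + k)
              ⟨by have := (hm_dom a ca hma).1; omega, by omega⟩
            have hadj' : A.Adj c'' c' := hadj c'' c' (by omega)
            rcases hcross c'' c' hadj' with hbb | ⟨_, ⟨y, hy⟩⟩
            · rw [← hbb]; exact ih c'' hc'' (by omega)
            · have hyv : s c' = y := hcons y c' hy
              have : y = a + (k + 1) := by omega
              subst this
              rw [hnone (a + (k + 1)) (by omega) (by omega)] at hy
              exact absurd hy (by simp)
        have hblk : blk c = blk ca := chain (s c - a) c (by omega) (by omega)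
        exact ⟨h1, h2, Or.inr ⟨a, co, ca, cc, ha, hco, hma, hmc, hblk.symm,
          by rw [← hbeq, hblk], hnone⟩⟩
      · have : d = c := hinj (by rw [hcons (s c) d hx])
        subst this
        exact ⟨h1, h2, Or.inl ⟨d, hx, rfl⟩⟩
    intro b
    refine ⟨fun c => s c.1, fun c c' h => Subtype.ext (hinj h), ?_, ?_, ?_, ?_⟩
    · intro c
      have := key c.1
      rwa [c.2] at this
    · intro x hx
      obtain ⟨h1, h2, _⟩ := id hx
      obtain ⟨c, hc⟩ := hsurj x ⟨h1, h2⟩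
      have hb : blk c = b := blockNums_eq_of_mem (hc ▸ key c) hx
      exact ⟨⟨c, hb⟩, hc⟩
    · intro c c' h; exact hadj c.1 c'.1 h
    · intro x c hx; exact hcons x c.1 hx
  · intro hb
    choose S hSinj hSmem hSsurj hSadj hScons using hb
    set s : C → ℕ := fun c => S (blk c) ⟨c, rfl⟩ with hs
    have hval : ∀ (c : C) (b : β) (hc : blk c = b), S b ⟨c, hc⟩ = s c := by
      intro c b hc; subst hc; rfl
    have memAll : ∀ c, s c ∈ blockNums blk m n (blk c) := fun c => hSmem (blk c) ⟨c, rfl⟩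
    have hscons : ∀ x c, m x = some c → s c = x := by
      intro x c hx
      have := hScons (blk c) x ⟨c, rfl⟩ hx
      rwa [hval c (blk c) rfl] at this
    have hsinj : Function.Injective s := by
      intro c c' h
      by_cases hbb : blk c = blk c'
      · have heq : S (blk c) ⟨c, rfl⟩ = S (blk c) ⟨c', hbb.symm⟩ := by
          rw [hval c' (blk c) hbb.symm]; exact h
        have := hSinj (blk c) heq
        exact congrArg Subtype.val this
      · exact absurd (blockNums_eq_of_mem (memAll c) (h ▸ memAll c')) hbb
    -- if a cell's number is pre-placed, it is pre-placed on that very cell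
    have key2 : ∀ c d, m (s c) = some d → m (s c) = some c := by
      intro c d hd
      obtain ⟨_, _, hor⟩ := memAll c
      rcases hor with ⟨d', hd', _⟩ | ⟨a, co, ca, cc, ha, hco, hma, hmc, _, _, hnone⟩
      · have : d' = c := hsinj (hscons (s c) d' hd')
        rwa [this] at hd'
      · rw [hnone (s c) ha hco] at hd; exact absurd hd (by simp)
    refine ⟨s, hsinj, ?_, ?_, ?_, hscons⟩
    · intro c; obtain ⟨h1, h2, _⟩ := memAll c; exact ⟨h1, h2⟩
    · intro k hk
      rcases hmk : m k with _ | c0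
      · obtain ⟨a, co, ca, cc, ha, hco, hma, hmc, hbeq, hnone⟩ := hgap k hk.1 hk.2 hmk
        have hkmem : k ∈ blockNums blk m n (blk ca) :=
          ⟨hk.1, hk.2, Or.inr ⟨a, co, ca, cc, ha, hco, hma, hmc, rfl, hbeq.symm, hnone⟩⟩
        obtain ⟨⟨c, hc⟩, hsc⟩ := hSsurj (blk ca) k hkmem
        exact ⟨c, by rw [← hval c (blk ca) hc]; exact hsc⟩
      · exact ⟨c0, hscons k c0 hmk⟩
    · intro c c' h
      by_cases hbb : blk c = blk c'
      · have heq : S (blk c) ⟨c', hbb.symm⟩ = S (blk c) ⟨c, rfl⟩ + 1 := by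
          rw [hval c' (blk c) hbb.symm, hval c (blk c) rfl]; exact h
        exact hSadj (blk c) ⟨c, rfl⟩ ⟨c', hbb.symm⟩ heq
      · -- across blocks: both numbers must be pre-placed
        have hmx : m (s c) = some c := by
          rcases hd : m (s c) with _ | d
          · exfalso
            obtain ⟨_, _, hor⟩ := memAll c
            rcases hor with ⟨d', hd', _⟩ | ⟨a, co, ca, cc, ha, hco, hma, hmc, hba, hbc, hnone⟩
            · rw [hd] at hd'; exact absurd hd' (by simp)
            · obtain ⟨_, _, hor'⟩ := memAll c'
              rcases hor' with ⟨d', hd', hbd'⟩ | ⟨a', co', ca', cc', ha', hco', hma', hmc', hba', hbc', hnone'⟩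
              · -- s c' = s c + 1 is pre-placed; it must be the right endpoint co
                rw [h] at hd'
                have hco1 : s c + 1 = co := by
                  rcases lt_or_eq_of_le (by omega : s c + 1 ≤ co) with hlt | he
                  · rw [hnone (s c + 1) (by omega) hlt] at hd'
                    exact absurd hd' (by simp)
                  · exact he
                rw [hco1, hmc] at hd'
                injection hd' with e
                exact hbb (by rw [← hbc, e]; exact hbd')
              · -- s c' = s c + 1 lies in a gap; the two gaps coincide
                rw [h] at ha' hco'
                have hlt : s c + 1 < co := by
                  rcases lt_or_eq_of_le (by omega : s c + 1 ≤ co) with hlt | he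
                  · exact hlt
                  · rw [← he] at hmc
                    rw [hnone' (s c + 1) ha' hco'] at hmc
                    exact absurd hmc (by simp)
                have haa : a = a' := by
                  rcases lt_trichotomy a a' with h' | h' | h'
                  · rw [hnone a' h' (by omega)] at hma'; exact absurd hma' (by simp)
                  · exact h'
                  · rw [hnone' a h' (by omega)] at hma; exact absurd hma (by simp)
                subst haa
                rw [hma] at hma'
                injection hma' with e
                exact hbb (by rw [← hba, e, hba'])
          · have := key2 c d hd; rw [hd] at this; exact this
        have hmx1 : m (s c + 1) = some c' := by
          rcases hd : m (s c + 1) with _ | d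
          · exfalso
            obtain ⟨_, _, hor'⟩ := memAll c'
            rcases hor' with ⟨d', hd', _⟩ | ⟨a', co', ca', cc', ha', hco', hma', hmc', hba', hbc', hnone'⟩
            · rw [h, hd] at hd'; exact absurd hd' (by simp)
            · rw [h] at ha' hco'
              have haeq : a' = s c := by
                rcases lt_trichotomy a' (s c) with h' | h' | h'
                · rw [hnone' (s c) h' (by omega)] at hmx; exact absurd hmx (by simp)
                · exact h'
                · omega
              subst haeq
              rw [hmx] at hma'
              injection hma' with e
              exact hbb (by rw [e, hba'])
          · have := key2 c' d (by rw [← h] at hd; exact hd)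
            rw [h, hd] at this; exact this
        exact hpre (s c) c c' hmx hmx1
end
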